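/- Soft-thresholding of singular values solves the nuclear-norm proximal problem: for any matrix A ∈ ℝ^{N×T} with singular value decomposition A = UΣV' and any τ > 0, the unique minimizer of (1/2)‖Θ − A‖_F² + τ‖Θ‖_nuc over Θ ∈ ℝ^{N×T} is S_τ(A) = U · diag(max{Σ_{rr} − τ, 0}) · V'. -/

import Mathlib

open Matrix BigOperators MeasureTheory ProbabilityTheory

/-- The singular values of a real matrix `A`, defined as the square roots of the
eigenvalues of `Aᴴ * A` (not sorted). -/
noncomputable def singularValues {N T : ℕ} (A : Matrix (Fin N) (Fin T) ℝ) : Fin T → ℝ :=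
  fun j => Real.sqrt ((by simpa using Matrix.isHermitian_conjTranspose_mul_self A : (Aᵀ * A).IsHermitian).eigenvalues j)

/-- The nuclear norm of a real matrix: the sum of its singular values. -/
noncomputable def nuclearNorm {N T : ℕ} (A : Matrix (Fin N) (Fin T) ℝ) : ℝ :=
  ∑ j, singularValues A j

/-- The Frobenius norm of a real matrix. -/
noncomputable def frobNorm {N T : ℕ} (A : Matrix (Fin N) (Fin T) ℝ) : ℝ :=
  Real.sqrt (∑ i, ∑ j, (A i j)^2)

/-- The operator (spectral) norm of a real matrix: its largest singular value. -/
noncomputable def opNorm {N T : ℕ} (A : Matrix (Fin N) (Fin T) ℝ) : ℝ :=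
  ⨆ j, singularValues A j

/-!
Put `D = S_τ(Σ)` and `S = U D Vᵀ`. The residual `A - S = U (Σ - D) Vᵀ` has diagonal entries
`min(Σ_rr, τ) ∈ [0, τ]`, so its operator norm is at most `τ`, while
`⟨A - S, S⟩ = τ ∑_r D_rr = τ ‖S‖_nuc`. By trace duality `⟨X, Θ⟩ ≤ ‖X‖_op ‖Θ‖_nuc` this makes
`A - S` a subgradient of `τ ‖·‖_nuc` at `S`, and expanding
`‖Θ - A‖_F² = ‖Θ - S‖_F² + ‖S - A‖_F² - 2⟨A - S, Θ - S⟩` gives `f(Θ) ≥ f(S) + ½ ‖Θ - S‖_F²` for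
the objective `f`: minimality and uniqueness at once.
-/

open Function

section SupportSubsingleton

variable {ι M : Type*} [Fintype ι] [AddCommMonoid M] {f : ι → M}

theorem sum_comp_eq_comp_sum_of_support_subsingleton {N : Type*} [AddCommMonoid N]
    (hf : (support f).Subsingleton) {g : M → N} (hg : g 0 = 0) :
    ∑ i, g (f i) = g (∑ i, f i) := by
  rcases hf.eq_empty_or_singleton with h | ⟨i₀, h⟩
  · simp [support_eq_empty_iff.mp h, hg]
  · have hz : ∀ i ≠ i₀, f i = 0 := fun i hi => notMem_support.mp (h ▸ hi)
    rw [Fintype.sum_eq_single i₀ fun i hi => by rw [hz i hi, hg], Fintype.sum_eq_single i₀ hz]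

theorem sum_le_of_support_subsingleton [LE M] (hf : (support f).Subsingleton) {c : M}
    (hc : 0 ≤ c) (h : ∀ i, f i ≤ c) : ∑ i, f i ≤ c := by
  rcases hf.eq_empty_or_singleton with hs | ⟨i₀, hs⟩
  · simpa [support_eq_empty_iff.mp hs] using hc
  · rw [Fintype.sum_eq_single i₀ fun i hi => notMem_support.mp (hs ▸ hi)]
    exact h i₀

end SupportSubsingleton

theorem dotProduct_le_sqrt_mul_sqrt {n : Type*} [Fintype n] (u v : n → ℝ) :
    u ⬝ᵥ v ≤ √(u ⬝ᵥ u) * √(v ⬝ᵥ v) := by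
  simpa [dotProduct, sq] using Real.sum_mul_le_sqrt_mul_sqrt Finset.univ u v

theorem sub_max_sub_zero_eq_min (s τ : ℝ) : s - max (s - τ) 0 = min s τ := by
  rcases le_total s τ with h | h
  · rw [max_eq_right (by linarith), min_eq_left h, sub_zero]
  · rw [max_eq_left (by linarith), min_eq_right h, sub_sub_cancel]

theorem min_mul_max_sub_zero (s τ : ℝ) : min s τ * max (s - τ) 0 = τ * max (s - τ) 0 := by
  rcases le_total s τ with h | h
  · rw [max_eq_right (by linarith), mul_zero, mul_zero]
  · rw [min_eq_right h]

namespace Matrix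

section Orthogonal

variable {R : Type*} [CommSemiring R] {l m n p : Type*} [Fintype l] [Fintype m] [Fintype n]

theorem mulVec_dotProduct_mulVec (P Q : Matrix m n R) (u v : n → R) :
    (P *ᵥ u) ⬝ᵥ (Q *ᵥ v) = u ⬝ᵥ ((Pᵀ * Q) *ᵥ v) := by
  rw [dotProduct_mulVec, dotProduct_mulVec, ← vecMul_vecMul, vecMul_transpose]

theorem transpose_mul_orthogonal_conj [DecidableEq m] {U : Matrix l m R} (hU : Uᵀ * U = 1)
    (P Q : Matrix m n R) (V : Matrix p n R) : (U * P * Vᵀ)ᵀ * (U * Q * Vᵀ) = V * (Pᵀ * Q) * Vᵀ := by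
  simp only [transpose_mul, transpose_transpose, Matrix.mul_assoc]
  rw [← Matrix.mul_assoc Uᵀ, hU, Matrix.one_mul]

end Orthogonal

-- `hM.eigenvalues` lists the spectrum in no specified order, so only symmetric functions of it
-- are determined by the characteristic polynomial.
theorem IsHermitian.sum_comp_eigenvalues_of_eq_conj {n : Type*} [Fintype n] [DecidableEq n]
    {M W : Matrix n n ℝ} (hM : M.IsHermitian) (hW : W * Wᵀ = 1) {d : n → ℝ}
    (h : M = W * diagonal d * Wᵀ) (g : ℝ → ℝ) : ∑ j, g (hM.eigenvalues j) = ∑ j, g (d j) := by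
  have hchar : M.charpoly = (diagonal d).charpoly := by
    rw [h, charpoly_mul_comm, ← Matrix.mul_assoc, mul_eq_one_comm.mp hW, Matrix.one_mul]
  have hroots := hM.roots_charpoly_eq_eigenvalues
  rw [hchar, charpoly_diagonal, Polynomial.roots_prod _ _ (by
    simp [Finset.prod_ne_zero_iff, Polynomial.X_sub_C_ne_zero])] at hroots
  simpa [← Finset.sum_map_val, Multiset.map_map, Function.comp_def] using
    congrArg (fun s => (s.map g).sum) hroots.symm

section FrobeniusInner

variable {l m n : Type*} [Fintype l] [Fintype m] [Fintype n]

def frobInner (P Q : Matrix m n ℝ) : ℝ :=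
  ∑ i, ∑ j, P i j * Q i j

theorem frobInner_eq_trace (P Q : Matrix m n ℝ) : frobInner P Q = trace (Pᵀ * Q) := by
  rw [frobInner, trace, Finset.sum_comm]
  rfl

theorem frobInner_mul_eq_sum_mulVec_dotProduct (P Q : Matrix m n ℝ) (W : Matrix n n ℝ) :
    frobInner (P * W) (Q * W) = ∑ k, (P *ᵥ Wᵀ k) ⬝ᵥ (Q *ᵥ Wᵀ k) := by
  rw [frobInner, Finset.sum_comm]
  rfl

theorem frobInner_mul_left [DecidableEq m] {U : Matrix l m ℝ} (hU : Uᵀ * U = 1)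
    (P Q : Matrix m n ℝ) : frobInner (U * P) (U * Q) = frobInner P Q := by
  simp only [frobInner_eq_trace, transpose_mul, Matrix.mul_assoc]
  rw [← Matrix.mul_assoc Uᵀ, hU, Matrix.one_mul]

theorem frobInner_mul_right [DecidableEq n] {W : Matrix n n ℝ} (hW : W * Wᵀ = 1)
    (P Q : Matrix m n ℝ) : frobInner (P * W) (Q * W) = frobInner P Q := by
  rw [frobInner_eq_trace, frobInner_eq_trace, transpose_mul, trace_mul_comm, Matrix.mul_assoc,
    ← Matrix.mul_assoc W, hW, Matrix.one_mul, trace_mul_comm]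

end FrobeniusInner

section Prox

variable {m n : Type*} [Fintype m] [Fintype n]

noncomputable def proxObjective (R : Matrix m n ℝ → ℝ) (A Θ : Matrix m n ℝ) : ℝ :=
  (1/2) * (∑ i, ∑ j, (Θ i j - A i j)^2) + R Θ

theorem eq_of_sum_sum_sq_sub_nonpos {P Q : Matrix m n ℝ}
    (h : ∑ i, ∑ j, (P i j - Q i j) ^ 2 ≤ 0) : P = Q := by
  have h0 := le_antisymm h (by positivity)
  simp only [Finset.sum_eq_zero_iff_of_nonneg (fun i _ => Finset.sum_nonneg fun j _ =>
    sq_nonneg (P i j - Q i j)), Finset.sum_eq_zero_iff_of_nonneg (fun _ _ => sq_nonneg _),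
    Finset.mem_univ, forall_const, pow_eq_zero_iff two_ne_zero, sub_eq_zero] at h0
  exact ext h0

theorem sum_sum_sq_sub_eq (A S Θ : Matrix m n ℝ) :
    ∑ i, ∑ j, (Θ i j - A i j) ^ 2 = ∑ i, ∑ j, (Θ i j - S i j) ^ 2 + ∑ i, ∑ j, (S i j - A i j) ^ 2
      - 2 * frobInner (A - S) Θ + 2 * frobInner (A - S) S := by
  simp only [frobInner, sub_apply, Finset.mul_sum, ← Finset.sum_add_distrib,
    ← Finset.sum_sub_distrib]
  exact Finset.sum_congr rfl fun i _ => Finset.sum_congr rfl fun j _ => by ring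

-- For positively homogeneous `R`, `hsub` and `hS` say that `A - S` is a subgradient of `R` at `S`.
theorem proxObjective_add_le_of_subgradient {R : Matrix m n ℝ → ℝ} {A S : Matrix m n ℝ}
    (hsub : ∀ Θ, frobInner (A - S) Θ ≤ R Θ) (hS : frobInner (A - S) S = R S)
    (Θ : Matrix m n ℝ) :
    proxObjective R A S + (1/2) * ∑ i, ∑ j, (Θ i j - S i j) ^ 2 ≤ proxObjective R A Θ := by
  unfold proxObjective
  linarith [sum_sum_sq_sub_eq A S Θ, hsub Θ]

theorem unique_min_proxObjective_of_subgradient {R : Matrix m n ℝ → ℝ} {A S : Matrix m n ℝ}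
    (hsub : ∀ Θ, frobInner (A - S) Θ ≤ R Θ) (hS : frobInner (A - S) S = R S) :
    (∀ Θ, proxObjective R A S ≤ proxObjective R A Θ) ∧
      ∀ Θ, proxObjective R A Θ = proxObjective R A S → Θ = S := by
  have key := proxObjective_add_le_of_subgradient hsub hS
  refine ⟨fun Θ => ?_, fun Θ hΘ => eq_of_sum_sum_sq_sub_nonpos ?_⟩
  · have : 0 ≤ ∑ i, ∑ j, (Θ i j - S i j) ^ 2 := by positivity
    linarith [key Θ]
  · linarith [key Θ]

end Prox

section RectDiag

variable {N T : ℕ}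

def IsRectDiag {R : Type*} [Zero R] (P : Matrix (Fin N) (Fin T) R) : Prop :=
  ∀ (i : Fin N) (j : Fin T), (i : ℕ) ≠ j → P i j = 0

theorem IsRectDiag.support_col_subsingleton {R : Type*} [Zero R] {P : Matrix (Fin N) (Fin T) R}
    (hP : P.IsRectDiag) (j : Fin T) : (support fun i => P i j).Subsingleton :=
  fun i hi i' hi' =>
    Fin.ext ((not_imp_comm.mp (hP i j) hi).trans (not_imp_comm.mp (hP i' j) hi').symm)

theorem IsRectDiag.sub {R : Type*} [SubtractionMonoid R] {P Q : Matrix (Fin N) (Fin T) R}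
    (hP : P.IsRectDiag) (hQ : Q.IsRectDiag) : (P - Q).IsRectDiag :=
  fun i j h => by simp [hP i j h, hQ i j h]

theorem IsRectDiag.transpose_mul_self {R : Type*} [Semiring R] {P : Matrix (Fin N) (Fin T) R}
    (hP : P.IsRectDiag) : Pᵀ * P = diagonal fun j => ∑ i, P i j ^ 2 := by
  ext j j'
  rcases eq_or_ne j j' with rfl | hjj'
  · simp [mul_apply, sq]
  · rw [diagonal_apply_ne _ hjj', mul_apply]
    refine Finset.sum_eq_zero fun i _ => ?_
    by_cases hij : (i : ℕ) = j
    · rw [hP i j' fun h => hjj' (Fin.ext (hij.symm.trans h)), mul_zero]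
    · rw [transpose_apply, hP i j hij, zero_mul]

theorem mulVec_dotProduct_self_le_of_isRectDiag {U : Matrix (Fin N) (Fin N) ℝ}
    {V : Matrix (Fin T) (Fin T) ℝ} (hU : Uᵀ * U = 1) (hV : V * Vᵀ = 1)
    {P : Matrix (Fin N) (Fin T) ℝ} (hP : P.IsRectDiag) {τ : ℝ} (hPτ : ∀ i j, |P i j| ≤ τ)
    (c : Fin T → ℝ) : ((U * P * Vᵀ) *ᵥ c) ⬝ᵥ ((U * P * Vᵀ) *ᵥ c) ≤ τ ^ 2 * (c ⬝ᵥ c) := by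
  have hcol : ∀ j, ∑ i, P i j ^ 2 ≤ τ ^ 2 := fun j =>
    sum_le_of_support_subsingleton
      ((hP.support_col_subsingleton j).anti (support_comp_subset (g := fun x => x ^ 2) (by simp) _))
      (sq_nonneg τ) fun i => sq_le_sq' (abs_le.mp (hPτ i j)).1 (abs_le.mp (hPτ i j)).2
  set u := Vᵀ *ᵥ c
  have hu : u ⬝ᵥ u = c ⬝ᵥ c := by
    rw [mulVec_dotProduct_mulVec, transpose_transpose, hV, one_mulVec]
  calc ((U * P * Vᵀ) *ᵥ c) ⬝ᵥ ((U * P * Vᵀ) *ᵥ c)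
      = ∑ j, (∑ i, P i j ^ 2) * u j ^ 2 := by
        rw [mulVec_dotProduct_mulVec, transpose_mul_orthogonal_conj hU, hP.transpose_mul_self,
          ← mulVec_mulVec, ← mulVec_mulVec, dotProduct_mulVec, ← mulVec_transpose]
        simp only [dotProduct, mulVec_diagonal]
        exact Finset.sum_congr rfl fun j _ => by ring
    _ ≤ ∑ j, τ ^ 2 * u j ^ 2 :=
        Finset.sum_le_sum fun j _ => mul_le_mul_of_nonneg_right (hcol j) (sq_nonneg _)
    _ = τ ^ 2 * (c ⬝ᵥ c) := by
        rw [← hu, ← Finset.mul_sum]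
        simp [dotProduct, sq]

def rectSoftThreshold (τ : ℝ) (P : Matrix (Fin N) (Fin T) ℝ) : Matrix (Fin N) (Fin T) ℝ :=
  of fun i j => if (i : ℕ) = j then max (P i j - τ) 0 else 0

theorem isRectDiag_rectSoftThreshold (τ : ℝ) (P : Matrix (Fin N) (Fin T) ℝ) :
    (rectSoftThreshold τ P).IsRectDiag :=
  fun _ _ h => if_neg h

theorem IsRectDiag.rectSoftThreshold_apply {P : Matrix (Fin N) (Fin T) ℝ} (hP : P.IsRectDiag)
    {τ : ℝ} (hτ : 0 ≤ τ) (i : Fin N) (j : Fin T) :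
    rectSoftThreshold τ P i j = max (P i j - τ) 0 := by
  by_cases h : (i : ℕ) = j
  · exact if_pos h
  · rw [hP i j h, zero_sub, max_eq_right (neg_nonpos.mpr hτ)]
    exact if_neg h

theorem IsRectDiag.abs_sub_rectSoftThreshold_le {P : Matrix (Fin N) (Fin T) ℝ}
    (hP : P.IsRectDiag) (hP₀ : ∀ i j, 0 ≤ P i j) {τ : ℝ} (hτ : 0 ≤ τ) (i : Fin N) (j : Fin T) :
    |(P - rectSoftThreshold τ P) i j| ≤ τ := by
  rw [sub_apply, hP.rectSoftThreshold_apply hτ, sub_max_sub_zero_eq_min,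
    abs_of_nonneg (le_min (hP₀ i j) hτ)]
  exact min_le_right _ _

theorem IsRectDiag.frobInner_sub_rectSoftThreshold {P : Matrix (Fin N) (Fin T) ℝ}
    (hP : P.IsRectDiag) {τ : ℝ} (hτ : 0 ≤ τ) :
    frobInner (P - rectSoftThreshold τ P) (rectSoftThreshold τ P)
      = τ * ∑ i, ∑ j, |rectSoftThreshold τ P i j| := by
  simp only [frobInner, Finset.mul_sum, sub_apply, hP.rectSoftThreshold_apply hτ,
    sub_max_sub_zero_eq_min, min_mul_max_sub_zero, abs_of_nonneg (le_max_right _ (0 : ℝ))]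

end RectDiag

end Matrix

section NuclearNorm

variable {N T : ℕ}

theorem nuclearNorm_orthogonal_conj_of_isRectDiag {U : Matrix (Fin N) (Fin N) ℝ}
    {V : Matrix (Fin T) (Fin T) ℝ} (hU : Uᵀ * U = 1) (hV : V * Vᵀ = 1)
    {P : Matrix (Fin N) (Fin T) ℝ} (hP : P.IsRectDiag) :
    nuclearNorm (U * P * Vᵀ) = ∑ i, ∑ j, |P i j| := by
  rw [nuclearNorm, Finset.sum_comm]
  refine (IsHermitian.sum_comp_eigenvalues_of_eq_conj _ hV
    (by rw [transpose_mul_orthogonal_conj hU, hP.transpose_mul_self]) Real.sqrt).trans ?_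
  refine Finset.sum_congr rfl fun j _ => ?_
  have hcol : (support fun i => |P i j|).Subsingleton :=
    (hP.support_col_subsingleton j).anti (support_comp_subset abs_zero _)
  simp_rw [← sq_abs (P _ j)]
  rw [sum_comp_eq_comp_sum_of_support_subsingleton hcol (g := fun x => x ^ 2) (by simp),
    Real.sqrt_sq (Finset.sum_nonneg fun i _ => abs_nonneg _)]

-- Trace duality `⟨X, Θ⟩ ≤ ‖X‖_op ‖Θ‖_nuc`, `hX` saying `‖X‖_op ≤ τ`: in an orthonormal eigenbasis
-- `(w k)` of `ΘᵀΘ` the pairing is `∑ k, ⟨X w k, Θ w k⟩`, and `‖Θ w k‖` is a singular value of `Θ`.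
theorem frobInner_le_mul_nuclearNorm {X : Matrix (Fin N) (Fin T) ℝ} {τ : ℝ} (hτ : 0 ≤ τ)
    (hX : ∀ c, (X *ᵥ c) ⬝ᵥ (X *ᵥ c) ≤ τ ^ 2 * (c ⬝ᵥ c)) (Θ : Matrix (Fin N) (Fin T) ℝ) :
    frobInner X Θ ≤ τ * nuclearNorm Θ := by
  have hH : (Θᵀ * Θ).IsHermitian := by simpa using isHermitian_conjTranspose_mul_self Θ
  set W : Matrix (Fin T) (Fin T) ℝ := (hH.eigenvectorUnitary : Matrix (Fin T) (Fin T) ℝ)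
  have hW : W * Wᵀ = 1 := by
    simpa [star_eq_conjTranspose] using mem_unitaryGroup_iff.mp hH.eigenvectorUnitary.2
  have hWW : Wᵀ * W = 1 := mul_eq_one_comm.mp hW
  have hunit : ∀ k, Wᵀ k ⬝ᵥ Wᵀ k = 1 := fun k => by
    simpa [mul_apply, one_apply, dotProduct] using congrFun₂ hWW k k
  have heig : ∀ k, (Θ *ᵥ Wᵀ k) ⬝ᵥ (Θ *ᵥ Wᵀ k) = hH.eigenvalues k := fun k => by
    have hvec : (Θᵀ * Θ) *ᵥ Wᵀ k = hH.eigenvalues k • Wᵀ k := hH.mulVec_eigenvectorBasis k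
    rw [mulVec_dotProduct_mulVec, hvec, dotProduct_smul, hunit k, smul_eq_mul, mul_one]
  rw [← frobInner_mul_right hW, frobInner_mul_eq_sum_mulVec_dotProduct, nuclearNorm,
    Finset.mul_sum]
  refine Finset.sum_le_sum fun k _ => (dotProduct_le_sqrt_mul_sqrt _ _).trans ?_
  rw [heig k]
  refine mul_le_mul_of_nonneg_right ?_ (Real.sqrt_nonneg _)
  calc √((X *ᵥ Wᵀ k) ⬝ᵥ (X *ᵥ Wᵀ k)) ≤ √(τ ^ 2 * 1) :=
        Real.sqrt_le_sqrt (hunit k ▸ hX _)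
    _ = τ := by rw [mul_one, Real.sqrt_sq hτ]

end NuclearNorm

theorem soft_thresholding_prox_general {N T : ℕ}
    (A : Matrix (Fin N) (Fin T) ℝ) (τ : ℝ) (hτ : 0 < τ)
    (U : Matrix (Fin N) (Fin N) ℝ) (V : Matrix (Fin T) (Fin T) ℝ)
    (hU₁ : Uᵀ * U = 1) (hV₁ : Vᵀ * V = 1) (hV₂ : V * Vᵀ = 1)
    (Sg : Matrix (Fin N) (Fin T) ℝ)
    (hdiag : ∀ (i : Fin N) (j : Fin T), (i : ℕ) ≠ (j : ℕ) → Sg i j = 0)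
    (hnonneg : ∀ i j, 0 ≤ Sg i j)
    (hA : A = U * Sg * Vᵀ) :
    (∀ Θ : Matrix (Fin N) (Fin T) ℝ,
        (1/2) * (∑ i, ∑ j,
            ((U * (Matrix.of fun (i : Fin N) (j : Fin T) => if (i:ℕ) = (j:ℕ) then max (Sg i j - τ) 0 else 0) * Vᵀ) i j
              - A i j)^2)
          + τ * nuclearNorm (U * (Matrix.of fun (i : Fin N) (j : Fin T) => if (i:ℕ) = (j:ℕ) then max (Sg i j - τ) 0 else 0) * Vᵀ)
        ≤ (1/2) * (∑ i, ∑ j, (Θ i j - A i j)^2) + τ * nuclearNorm Θ) ∧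
    (∀ Θ : Matrix (Fin N) (Fin T) ℝ,
        (1/2) * (∑ i, ∑ j, (Θ i j - A i j)^2) + τ * nuclearNorm Θ
          = (1/2) * (∑ i, ∑ j,
              ((U * (Matrix.of fun (i : Fin N) (j : Fin T) => if (i:ℕ) = (j:ℕ) then max (Sg i j - τ) 0 else 0) * Vᵀ) i j
                - A i j)^2)
            + τ * nuclearNorm (U * (Matrix.of fun (i : Fin N) (j : Fin T) => if (i:ℕ) = (j:ℕ) then max (Sg i j - τ) 0 else 0) * Vᵀ)
          → Θ = U * (Matrix.of fun (i : Fin N) (j : Fin T) => if (i:ℕ) = (j:ℕ) then max (Sg i j - τ) 0 else 0) * Vᵀ) := by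
  have hSg : Sg.IsRectDiag := hdiag
  have hD := isRectDiag_rectSoftThreshold τ Sg
  have hres : A - U * rectSoftThreshold τ Sg * Vᵀ = U * (Sg - rectSoftThreshold τ Sg) * Vᵀ := by
    rw [hA, Matrix.mul_sub, Matrix.sub_mul]
  refine unique_min_proxObjective_of_subgradient (R := fun Θ => τ * nuclearNorm Θ)
    (S := U * rectSoftThreshold τ Sg * Vᵀ) (fun Θ => ?_) ?_
  · rw [hres]
    exact frobInner_le_mul_nuclearNorm hτ.le (mulVec_dotProduct_self_le_of_isRectDiag hU₁ hV₂
      (hSg.sub hD) (hSg.abs_sub_rectSoftThreshold_le hnonneg hτ.le)) Θ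
  · rw [hres, frobInner_mul_right (by rwa [transpose_transpose]), frobInner_mul_left hU₁,
      hSg.frobInner_sub_rectSoftThreshold hτ.le,
      nuclearNorm_orthogonal_conj_of_isRectDiag hU₁ hV₂ hD]

/-- Singular-value soft-thresholding solves the nuclear-norm
proximal problem: if `A = U Σ Vᵀ` is an SVD, then
`S_τ(A) = U max(Σ − τ, 0) Vᵀ` is the unique minimizer of
`(1/2)‖Θ − A‖_F² + τ‖Θ‖_nuc`. -/
theorem soft_thresholding_prox {N T : ℕ}
    (A : Matrix (Fin N) (Fin T) ℝ) (τ : ℝ) (hτ : 0 < τ)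
    (U : Matrix (Fin N) (Fin N) ℝ) (V : Matrix (Fin T) (Fin T) ℝ)
    (hU₁ : Uᵀ * U = 1) (hU₂ : U * Uᵀ = 1) (hV₁ : Vᵀ * V = 1) (hV₂ : V * Vᵀ = 1)
    (Sg : Matrix (Fin N) (Fin T) ℝ)
    (hdiag : ∀ (i : Fin N) (j : Fin T), (i : ℕ) ≠ (j : ℕ) → Sg i j = 0)
    (hnonneg : ∀ i j, 0 ≤ Sg i j)
    (hA : A = U * Sg * Vᵀ) :
    (∀ Θ : Matrix (Fin N) (Fin T) ℝ,
        (1/2) * (∑ i, ∑ j,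
            ((U * (Matrix.of fun (i : Fin N) (j : Fin T) => if (i:ℕ) = (j:ℕ) then max (Sg i j - τ) 0 else 0) * Vᵀ) i j
              - A i j)^2)
          + τ * nuclearNorm (U * (Matrix.of fun (i : Fin N) (j : Fin T) => if (i:ℕ) = (j:ℕ) then max (Sg i j - τ) 0 else 0) * Vᵀ)
        ≤ (1/2) * (∑ i, ∑ j, (Θ i j - A i j)^2) + τ * nuclearNorm Θ) ∧
    (∀ Θ : Matrix (Fin N) (Fin T) ℝ,
        (1/2) * (∑ i, ∑ j, (Θ i j - A i j)^2) + τ * nuclearNorm Θ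
          = (1/2) * (∑ i, ∑ j,
              ((U * (Matrix.of fun (i : Fin N) (j : Fin T) => if (i:ℕ) = (j:ℕ) then max (Sg i j - τ) 0 else 0) * Vᵀ) i j
                - A i j)^2)
            + τ * nuclearNorm (U * (Matrix.of fun (i : Fin N) (j : Fin T) => if (i:ℕ) = (j:ℕ) then max (Sg i j - τ) 0 else 0) * Vᵀ)
          → Θ = U * (Matrix.of fun (i : Fin N) (j : Fin T) => if (i:ℕ) = (j:ℕ) then max (Sg i j - τ) 0 else 0) * Vᵀ) :=
  soft_thresholding_prox_general A τ hτ U V hU₁ hV₁ hV₂ Sg hdiag hnonneg hA
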